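/- arXiv:1101.0263 — 4 statements merged into one kernel-verified Lean document; each statement's English description precedes it below -/
import Mathlib

section
/- Let G be a finite group of orthogonal d×d real matrices acting irreducibly on ℝ^d. Then for every row vector z ∈ ℝ^d and every d×m real matrix Y, (1/|G|)·∑_{U ∈ G} |zUY|² = (1/d)·|z|²·‖Y‖²_HS. -/
/-!
Average the conjugates `U (Y Yᵀ) Uᵀ` over `G`. The average `M` is symmetric and commutes with
every element of `G`, so the eigenspace of `M` containing a real eigenvector `v` is `G`-invariant
and contains the `G`-orbit of `v`, which spans everything by irreducibility: `M` is a scalar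
(Schur's lemma). Comparing traces identifies the scalar as `|G| ‖Y‖²_HS / d`, and the left-hand
side of the identity is `zᵀ M z / |G|`.
-/

open Matrix

namespace Matrix

variable {n : Type*} [Fintype n]

theorem sum_sq_vecMul {m R : Type*} [Fintype m] [CommRing R] (z : n → R) (B : Matrix n m R) :
    ∑ k, (z ᵥ* B) k ^ 2 = z ⬝ᵥ (B * Bᵀ) *ᵥ z := by
  rw [← mulVec_mulVec, dotProduct_mulVec, mulVec_transpose]
  simp only [dotProduct, sq]

theorem trace_mul_transpose_self {m R : Type*} [Fintype m] [CommRing R] (Y : Matrix n m R) :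
    trace (Y * Yᵀ) = ∑ j, ∑ k, Y j k ^ 2 := by
  simp only [trace, diag, mul_apply, transpose_apply, sq]

variable [DecidableEq n]

theorem sum_comp_mul_left_of_mem {R M : Type*} [CommRing R] [AddCommMonoid M]
    {G : Finset (Matrix n n R)} (hGmul : ∀ U ∈ G, ∀ V ∈ G, U * V ∈ G)
    (hGinv : ∀ U ∈ G, U⁻¹ ∈ G) {V : Matrix n n R} (hV : V ∈ G) (hVdet : IsUnit V.det)
    (f : Matrix n n R → M) : ∑ U ∈ G, f (V * U) = ∑ U ∈ G, f U :=
  Finset.sum_nbij' (V * ·) (V⁻¹ * ·) (fun U hU ↦ hGmul V hV U hU)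
    (fun U hU ↦ hGmul _ (hGinv V hV) U hU) (fun U _ ↦ nonsing_inv_mul_cancel_left V U hVdet)
    (fun U _ ↦ mul_nonsing_inv_cancel_left V U hVdet) (fun _ _ ↦ rfl)

theorem commute_sum_mul_mul_star {R : Type*} [CommRing R] [StarRing R]
    {G : Finset (Matrix n n R)} (hGunit : ∀ U ∈ G, U ∈ unitaryGroup n R)
    (hGmul : ∀ U ∈ G, ∀ V ∈ G, U * V ∈ G) (hGinv : ∀ U ∈ G, U⁻¹ ∈ G)
    (A : Matrix n n R) {V : Matrix n n R} (hV : V ∈ G) :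
    Commute V (∑ U ∈ G, U * A * star U) := by
  have hVV : star V * V = 1 := (hGunit V hV).1
  calc V * ∑ U ∈ G, U * A * star U
      = ∑ U ∈ G, (V * U) * A * star (V * U) * V := by
        rw [Finset.mul_sum]
        refine Finset.sum_congr rfl fun U _ ↦ ?_
        simp only [star_mul, mul_assoc, hVV, mul_one]
    _ = (∑ U ∈ G, U * A * star U) * V := by
        rw [sum_comp_mul_left_of_mem hGmul hGinv hV
          (UnitaryGroup.det_isUnit ⟨V, hGunit V hV⟩) (fun U ↦ U * A * star U * V),
          Finset.sum_mul]

theorem trace_sum_mul_mul_star {R : Type*} [CommRing R] [StarRing R]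
    {G : Finset (Matrix n n R)} (hGunit : ∀ U ∈ G, U ∈ unitaryGroup n R) (A : Matrix n n R) :
    trace (∑ U ∈ G, U * A * star U) = G.card * trace A := by
  rw [trace_sum, Finset.sum_congr rfl fun U hU ↦ by
    rw [trace_mul_cycle, (hGunit U hU).1, one_mul], Finset.sum_const, nsmul_eq_mul]

theorem eq_smul_one_of_commute_of_mulVec_eq_smul {R : Type*} [CommRing R]
    {S : Set (Matrix n n R)} {M : Matrix n n R} {v : n → R} {μ : R}
    (hirr : Submodule.span R {y | ∃ U ∈ S, y = U *ᵥ v} = ⊤)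
    (hcomm : ∀ U ∈ S, Commute U M) (hv : M *ᵥ v = μ • v) : M = μ • 1 := by
  have hle :
      Submodule.span R {y | ∃ U ∈ S, y = U *ᵥ v} ≤ Module.End.eigenspace (mulVecLin M) μ := by
    rw [Submodule.span_le]
    rintro _ ⟨U, hU, rfl⟩
    rw [SetLike.mem_coe, Module.End.mem_eigenspace_iff]
    change M *ᵥ U *ᵥ v = μ • U *ᵥ v
    rw [mulVec_mulVec, ← (hcomm U hU).eq, ← mulVec_mulVec, hv, mulVec_smul]
  rw [hirr, top_le_iff] at hle
  refine mulVec_injective (funext fun x ↦ ?_)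
  have hx : x ∈ Module.End.eigenspace (mulVecLin M) μ := hle ▸ Submodule.mem_top
  rw [Module.End.mem_eigenspace_iff] at hx
  rw [smul_mulVec, one_mulVec]
  exact hx

theorem IsHermitian.exists_mulVec_eq_smul {𝕜 : Type*} [RCLike 𝕜] [Nonempty n]
    {A : Matrix n n 𝕜} (hA : A.IsHermitian) : ∃ (μ : 𝕜) (v : n → 𝕜), v ≠ 0 ∧ A *ᵥ v = μ • v := by
  obtain ⟨j⟩ := ‹Nonempty n›
  refine ⟨hA.eigenvalues j, (hA.eigenvectorBasis j).ofLp, ?_, ?_⟩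
  · simpa using hA.eigenvectorBasis.toBasis.ne_zero j
  · rw [hA.mulVec_eigenvectorBasis j, RCLike.real_smul_eq_coe_smul (K := 𝕜)]

theorem sum_mul_mul_star_eq_smul_one {𝕜 : Type*} [RCLike 𝕜] [Nonempty n]
    {G : Finset (Matrix n n 𝕜)} (hGunit : ∀ U ∈ G, U ∈ unitaryGroup n 𝕜)
    (hGmul : ∀ U ∈ G, ∀ V ∈ G, U * V ∈ G) (hGinv : ∀ U ∈ G, U⁻¹ ∈ G)
    (hirr : ∀ x : n → 𝕜, x ≠ 0 → Submodule.span 𝕜 {y | ∃ U ∈ G, y = U *ᵥ x} = ⊤)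
    {A : Matrix n n 𝕜} (hA : A.IsHermitian) :
    ∑ U ∈ G, U * A * star U = ((G.card : 𝕜) * trace A / Fintype.card n) • 1 := by
  set M := ∑ U ∈ G, U * A * star U
  have hM : M.IsHermitian :=
    isSelfAdjoint_sum G fun U _ ↦ isHermitian_mul_mul_conjTranspose U hA
  obtain ⟨μ, v, hv0, hv⟩ := hM.exists_mulVec_eq_smul
  have hMμ : M = μ • 1 := eq_smul_one_of_commute_of_mulVec_eq_smul (hirr v hv0)
    (fun U hU ↦ commute_sum_mul_mul_star hGunit hGmul hGinv A hU) hv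
  have htr : trace M = _ := trace_sum_mul_mul_star hGunit A
  rw [hMμ, trace_smul, trace_one, smul_eq_mul] at htr
  rw [hMμ, ← htr, mul_div_cancel_right₀ _ (Nat.cast_ne_zero.2 Fintype.card_ne_zero)]

end Matrix

/-- tight frame identity for a finite irreducible group of orthogonal
matrices. -/
theorem tight_frame_identity_finite {d m : ℕ} (hd : 0 < d)
    (G : Finset (Matrix (Fin d) (Fin d) ℝ))
    (hGorth : ∀ U ∈ G, U ∈ Matrix.orthogonalGroup (Fin d) ℝ)
    (hGone : (1 : Matrix (Fin d) (Fin d) ℝ) ∈ G)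
    (hGmul : ∀ U ∈ G, ∀ V ∈ G, U * V ∈ G)
    (hGinv : ∀ U ∈ G, U⁻¹ ∈ G)
    (hirr : ∀ x : Fin d → ℝ, x ≠ 0 →
      Submodule.span ℝ {y : Fin d → ℝ | ∃ U ∈ G, y = U.mulVec x} = ⊤)
    (z : Fin d → ℝ) (Y : Matrix (Fin d) (Fin m) ℝ) :
    (1 / (G.card : ℝ)) * ∑ U ∈ G, ∑ k, (Matrix.vecMul z (U * Y)) k ^ 2
      = (1 / (d : ℝ)) * (∑ i, z i ^ 2) * (∑ j, ∑ k, Y j k ^ 2) := by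
  have : Nonempty (Fin d) := Fin.pos_iff_nonempty.1 hd
  have hstar (U : Matrix (Fin d) (Fin d) ℝ) : star U = Uᵀ :=
    conjTranspose_eq_transpose_of_trivial U
  have hYY : (Y * Yᵀ).IsHermitian := by
    simpa only [conjTranspose_eq_transpose_of_trivial] using isHermitian_mul_conjTranspose_self Y
  have havg := sum_mul_mul_star_eq_smul_one hGorth hGmul hGinv hirr hYY
  have hsummand (U : Matrix (Fin d) (Fin d) ℝ) :
      ∑ k, (z ᵥ* (U * Y)) k ^ 2 = z ⬝ᵥ (U * (Y * Yᵀ) * star U) *ᵥ z := by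
    rw [sum_sq_vecMul, hstar, transpose_mul]
    simp only [Matrix.mul_assoc]
  have hG : (G.card : ℝ) ≠ 0 := Nat.cast_ne_zero.2 (Finset.card_ne_zero_of_mem hGone)
  rw [Finset.sum_congr rfl fun U _ ↦ hsummand U, ← dotProduct_sum, ← sum_mulVec, havg,
    smul_mulVec, one_mulVec, dotProduct_smul, trace_mul_transpose_self, Fintype.card_fin]
  simp only [smul_eq_mul, dotProduct, ← sq]
  field_simp
end

section
/- Let D ⊂ ℝ^d have irreducible symmetry group and let T be an invertible d×d matrix. Then (1/d)·‖T^{-1}‖²_HS = [V(D)^{1+4/d}/I(D)] / [V(T(D))^{2/d} · V(T^{-⊤}(D))^{1+2/d} / I(T^{-⊤}(D))], where V denotes volume and I the second moment of mass about the centroid. -/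
open MeasureTheory Matrix

/-- The centroid of a set in `ℝ^d`. -/
noncomputable def centroid {d : ℕ} (Ω : Set (Fin d → ℝ)) : Fin d → ℝ :=
  ((volume Ω).toReal)⁻¹ • ∫ x in Ω, x ∂volume

/-- The second moment of mass of a set about its centroid. -/
noncomputable def secondMoment {d : ℕ} (Ω : Set (Fin d → ℝ)) : ℝ :=
  ∫ x in Ω, ∑ i, (x i - centroid Ω i) ^ 2 ∂volume

/-- The volume of a set in `ℝ^d`, as a real number. -/
noncomputable def vol {d : ℕ} (Ω : Set (Fin d → ℝ)) : ℝ := (volume Ω).toReal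

/-!
Under `x ↦ A x` the second-moment matrix `C(Ω) = ∫_Ω (x - x̄)(x - x̄)ᵀ dx` transforms as
`C(AΩ) = |det A| • A C(Ω) Aᵀ`. Taking `A = U` a symmetry of `D` shows that every symmetry commutes
with `C(D)`; as the symmetries act irreducibly, an eigenspace of the symmetric matrix `C(D)` is
everything, so `C(D) = (I(D)/d) • 1`. Hence `I(T⁻ᵀ D) = |det T|⁻¹ (I(D)/d) ‖T⁻¹‖²_HS`, volumes
scale by `|det|`, and the identity reduces to bookkeeping of powers of `|det T|` and `V(D)`.
-/

theorem setIntegral_image_linearMap {E F : Type*} [NormedAddCommGroup E] [NormedSpace ℝ E]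
    [MeasurableSpace E] [BorelSpace E] [FiniteDimensional ℝ E]
    [NormedAddCommGroup F] [NormedSpace ℝ F]
    (μ : Measure E) [μ.IsAddHaarMeasure] {f : E →ₗ[ℝ] E} (hf : LinearMap.det f ≠ 0)
    (s : Set E) (g : E → F) :
    ∫ y in f '' s, g y ∂μ = |LinearMap.det f| • ∫ x in s, g (f x) ∂μ := by
  have hpres : MeasurePreserving f (ENNReal.ofReal |LinearMap.det f| • μ) μ := by
    refine ⟨f.continuous_of_finiteDimensional.measurable, ?_⟩
    rw [Measure.map_smul, Measure.map_linearMap_addHaar_eq_smul_addHaar μ hf, smul_smul,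
      ← ENNReal.ofReal_mul (abs_nonneg _), ← abs_mul, mul_inv_cancel₀ hf, abs_one,
      ENNReal.ofReal_one, one_smul]
  rw [hpres.setIntegral_image_emb
      (f.equivOfDetNeZero hf).toContinuousLinearEquiv.toHomeomorph.measurableEmbedding,
    Measure.restrict_smul, integral_smul_measure, ENNReal.toReal_ofReal (abs_nonneg _)]

theorem Continuous.integrableOn_of_isBounded {E F : Type*} [MeasurableSpace E]
    [MetricSpace E] [ProperSpace E] [OpensMeasurableSpace E] {μ : Measure E}
    [IsFiniteMeasureOnCompacts μ] [NormedAddCommGroup F] {g : E → F} (hg : Continuous g)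
    {s : Set E} (hs : Bornology.IsBounded s) : IntegrableOn g s μ :=
  (hg.continuousOn.integrableOn_compact hs.isCompact_closure).mono_set subset_closure

theorem Matrix.integral_mul_mul_apply {X : Type*} [MeasurableSpace X] {μ : Measure X}
    {m n p q : Type*} [Fintype n] [Fintype p] (A : Matrix m n ℝ) (F : X → Matrix n p ℝ)
    (B : Matrix p q ℝ) (hF : ∀ k l, Integrable (fun x => F x k l) μ) (i : m) (j : q) :
    ∫ x, (A * F x * B) i j ∂μ = (A * Matrix.of (fun k l => ∫ x, F x k l ∂μ) * B) i j := by
  have hpt : ∀ x, (A * F x * B) i j = ∑ l, ∑ k, A i k * F x k l * B l j := fun x => by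
    simp only [mul_apply, Finset.sum_mul]
  simp only [hpt, mul_apply, of_apply, Finset.sum_mul]
  rw [integral_finsetSum _ fun l _ => integrable_finsetSum _ fun k _ =>
    ((hF k l).const_mul _).mul_const _]
  refine Finset.sum_congr rfl fun l _ => ?_
  rw [integral_finsetSum _ fun k _ => ((hF k l).const_mul _).mul_const _]
  simp only [integral_mul_const, integral_const_mul]

theorem Matrix.trace_mul_transpose_self_s7 {m n : Type*} [Fintype m] [Fintype n]
    (A : Matrix m n ℝ) :
    (A * Aᵀ).trace = ∑ i, ∑ j, A i j ^ 2 := by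
  simp [trace, mul_apply, sq]

theorem Real.mul_rpow_mul_inv_mul_rpow {a V : ℝ} (ha : 0 < a) (hV : 0 < V) (p : ℝ) :
    (a * V) ^ p * (a⁻¹ * V) ^ (1 + p) = a⁻¹ * V ^ (1 + 2 * p) := by
  have hVp : V ^ p * V ^ (1 + p) = V ^ (1 + 2 * p) := by
    rw [← Real.rpow_add hV]
    ring_nf
  rw [Real.mul_rpow ha.le hV.le, Real.mul_rpow (inv_nonneg.2 ha.le) hV.le, Real.inv_rpow ha.le,
    ← hVp, Real.rpow_add ha, Real.rpow_one]
  field_simp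

section

variable {n : Type*} [Fintype n] [DecidableEq n]

theorem Matrix.setIntegral_image_mulVec {F : Type*} [NormedAddCommGroup F] [NormedSpace ℝ F]
    {A : Matrix n n ℝ} (hA : A.det ≠ 0) (s : Set (n → ℝ)) (g : (n → ℝ) → F) :
    ∫ y in A.mulVec '' s, g y = |A.det| • ∫ x in s, g (A *ᵥ x) := by
  have h := setIntegral_image_linearMap volume (f := toLin' A) (by rwa [LinearMap.det_toLin']) s g
  rwa [LinearMap.det_toLin'] at h

theorem Matrix.volume_image_mulVec (A : Matrix n n ℝ) (s : Set (n → ℝ)) :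
    volume (A.mulVec '' s) = ENNReal.ofReal |A.det| * volume s := by
  rw [← LinearMap.det_toLin' A]
  exact Measure.addHaar_image_linearMap volume (toLin' A) s

theorem Matrix.eq_smul_one_of_forall_commute {R : Type*} [CommRing R] {C : Matrix n n R}
    {P : Matrix n n R → Prop} {v : n → R} {μ : R} (hv : C *ᵥ v = μ • v)
    (hC : ∀ U, P U → Commute C U)
    (hspan : Submodule.span R {w | ∃ U, P U ∧ w = U *ᵥ v} = ⊤) :
    C = μ • 1 := by
  have hE : Module.End.eigenspace (toLin' C) μ = ⊤ := by
    rw [eq_top_iff, ← hspan, Submodule.span_le]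
    rintro _ ⟨U, hU, rfl⟩
    rw [SetLike.mem_coe, Module.End.mem_eigenspace_iff, toLin'_apply, mulVec_mulVec,
      (hC U hU).eq, ← mulVec_mulVec, hv, mulVec_smul]
  refine ext_iff_mulVec.2 fun w => ?_
  have hw : w ∈ Module.End.eigenspace (toLin' C) μ := hE ▸ Submodule.mem_top
  rw [Module.End.mem_eigenspace_iff, toLin'_apply] at hw
  rw [hw, smul_mulVec, one_mulVec]

end

section

variable {d : ℕ}

theorem vol_image_mulVec (A : Matrix (Fin d) (Fin d) ℝ) (Ω : Set (Fin d → ℝ)) :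
    vol (A.mulVec '' Ω) = |A.det| * vol Ω := by
  rw [vol, vol, volume_image_mulVec, ENNReal.toReal_mul, ENNReal.toReal_ofReal (abs_nonneg _)]

theorem centroid_image_mulVec {A : Matrix (Fin d) (Fin d) ℝ} (hA : A.det ≠ 0)
    {Ω : Set (Fin d → ℝ)} (hΩ : Bornology.IsBounded Ω) :
    centroid (A.mulVec '' Ω) = A *ᵥ centroid Ω := by
  have hcomm : ∫ x in Ω, A *ᵥ x = A *ᵥ ∫ x in Ω, x := by
    simpa using (toLin' A).toContinuousLinearMap.integral_comp_comm
      (continuous_id.integrableOn_of_isBounded (μ := volume) hΩ)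
  rw [centroid, centroid, setIntegral_image_mulVec hA, hcomm, volume_image_mulVec,
    ENNReal.toReal_mul, ENNReal.toReal_ofReal (abs_nonneg _), mulVec_smul, mul_inv, smul_smul,
    mul_right_comm, inv_mul_cancel₀ (abs_ne_zero.2 hA), one_mul]

noncomputable def secondMomentMatrix (Ω : Set (Fin d → ℝ)) : Matrix (Fin d) (Fin d) ℝ :=
  Matrix.of fun i j => ∫ x in Ω, (x i - centroid Ω i) * (x j - centroid Ω j)

theorem secondMomentMatrix_isHermitian (Ω : Set (Fin d → ℝ)) :
    (secondMomentMatrix Ω).IsHermitian := by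
  ext i j
  simp only [conjTranspose_apply, star_trivial, secondMomentMatrix, of_apply, mul_comm]

theorem trace_secondMomentMatrix {Ω : Set (Fin d → ℝ)} (hΩ : Bornology.IsBounded Ω) :
    (secondMomentMatrix Ω).trace = secondMoment Ω := by
  rw [secondMoment, integral_finsetSum _ fun i _ =>
    (Continuous.integrableOn_of_isBounded (by fun_prop) hΩ)]
  simp [trace, secondMomentMatrix, sq]

theorem secondMomentMatrix_image_mulVec {A : Matrix (Fin d) (Fin d) ℝ} (hA : A.det ≠ 0)
    {Ω : Set (Fin d → ℝ)} (hΩ : Bornology.IsBounded Ω) :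
    secondMomentMatrix (A.mulVec '' Ω) = |A.det| • (A * secondMomentMatrix Ω * Aᵀ) := by
  ext i j
  have hpt : ∀ x, ((A *ᵥ x) i - (A *ᵥ centroid Ω) i) * ((A *ᵥ x) j - (A *ᵥ centroid Ω) j)
      = (A * vecMulVec (x - centroid Ω) (x - centroid Ω) * Aᵀ) i j := fun x => by
    rw [mul_vecMulVec, vecMulVec_mul, vecMul_transpose, vecMulVec_apply, mulVec_sub]
    rfl
  simp only [secondMomentMatrix, of_apply, centroid_image_mulVec hA hΩ,
    setIntegral_image_mulVec hA, hpt, Matrix.smul_apply, smul_eq_mul]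
  rw [integral_mul_mul_apply _ _ _ fun k l => ?_]
  · simp [vecMulVec_apply]
  · exact Continuous.integrableOn_of_isBounded (by fun_prop) hΩ

theorem secondMomentMatrix_commute_of_mem_orthogonalGroup {Ω : Set (Fin d → ℝ)}
    (hΩ : Bornology.IsBounded Ω) {U : Matrix (Fin d) (Fin d) ℝ} (hU : U ∈ orthogonalGroup (Fin d) ℝ)
    (hUΩ : U.mulVec '' Ω = Ω) : Commute (secondMomentMatrix Ω) U := by
  have hdet : |U.det| = 1 := by
    rw [← Real.norm_eq_abs]
    exact CStarRing.norm_of_mem_unitary (det_of_mem_unitary hU)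
  have hconj := secondMomentMatrix_image_mulVec (abs_ne_zero.1 (hdet ▸ one_ne_zero)) hΩ
  rw [hUΩ, hdet, one_smul] at hconj
  calc secondMomentMatrix Ω * U = U * secondMomentMatrix Ω * (Uᵀ * U) := by
        rw [← Matrix.mul_assoc, ← hconj]
    _ = U * secondMomentMatrix Ω := by rw [(mem_orthogonalGroup_iff' _ _).1 hU, Matrix.mul_one]

theorem secondMomentMatrix_eq_smul_one (hd : 0 < d) {Ω : Set (Fin d → ℝ)}
    (hΩ : Bornology.IsBounded Ω)
    (hirr : ∀ x : Fin d → ℝ, x ≠ 0 →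
      Submodule.span ℝ {w : Fin d → ℝ | ∃ U : Matrix (Fin d) (Fin d) ℝ,
        (U ∈ Matrix.orthogonalGroup (Fin d) ℝ ∧ U.mulVec '' Ω = Ω) ∧ w = U.mulVec x}
        = ⊤) :
    secondMomentMatrix Ω = (secondMoment Ω / d) • 1 := by
  have hC := secondMomentMatrix_isHermitian Ω
  let i₀ : Fin d := ⟨0, hd⟩
  have hv : ⇑(hC.eigenvectorBasis i₀) ≠ 0 := fun h =>
    hC.eigenvectorBasis.toBasis.ne_zero i₀ (by ext i; exact congrFun h i)
  have hscalar : secondMomentMatrix Ω = hC.eigenvalues i₀ • 1 :=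
    eq_smul_one_of_forall_commute (hC.mulVec_eigenvectorBasis i₀)
      (fun U hU => secondMomentMatrix_commute_of_mem_orthogonalGroup hΩ hU.1 hU.2) (hirr _ hv)
  have htrace := trace_secondMomentMatrix hΩ
  rw [hscalar, trace_smul, trace_one, Fintype.card_fin, smul_eq_mul] at htrace
  rw [hscalar, ← htrace, mul_div_cancel_right₀ _ (Nat.cast_ne_zero.2 hd.ne')]

theorem secondMoment_image_mulVec {A : Matrix (Fin d) (Fin d) ℝ} (hA : A.det ≠ 0)
    {Ω : Set (Fin d → ℝ)} (hΩ : Bornology.IsBounded Ω) :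
    secondMoment (A.mulVec '' Ω) = |A.det| * (A * secondMomentMatrix Ω * Aᵀ).trace := by
  have hAΩ : Bornology.IsBounded (A.mulVec '' Ω) :=
    (toLin' A).toContinuousLinearMap.lipschitz.isBounded_image hΩ
  rw [← trace_secondMomentMatrix hAΩ, secondMomentMatrix_image_mulVec hA hΩ, trace_smul,
    smul_eq_mul]

theorem secondMoment_pos (hd : 0 < d) {Ω : Set (Fin d → ℝ)} (hΩ : Bornology.IsBounded Ω)
    (hpos : 0 < volume Ω) : 0 < secondMoment Ω := by
  -- `measure_singleton` below needs `volume` to have no atoms, which fails for `d = 0`.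
  have : Nonempty (Fin d) := ⟨⟨0, hd⟩⟩
  have hsupp : Function.support (fun x : Fin d → ℝ => ∑ i, (x i - centroid Ω i) ^ 2)
      = {centroid Ω}ᶜ := by
    ext x
    rw [Function.mem_support, Set.mem_compl_singleton_iff, Ne,
      Finset.sum_eq_zero_iff_of_nonneg fun i _ => sq_nonneg _, not_iff_not]
    simp [sub_eq_zero, funext_iff]
  rw [secondMoment, setIntegral_pos_iff_support_of_nonneg_ae
    (ae_of_all _ fun x => by positivity) (Continuous.integrableOn_of_isBounded (by fun_prop) hΩ),
    hsupp, Set.inter_comm, ← Set.sdiff_eq, measure_sdiff_null (measure_singleton _)]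
  exact hpos

end

theorem HS_norm_geometric_general {d : ℕ} (hd : 0 < d)
    (D : Set (Fin d → ℝ)) (hbd : Bornology.IsBounded D)
    (hpos : 0 < volume D)
    (hirr : ∀ x : Fin d → ℝ, x ≠ 0 →
      Submodule.span ℝ {w : Fin d → ℝ | ∃ U : Matrix (Fin d) (Fin d) ℝ,
        (U ∈ Matrix.orthogonalGroup (Fin d) ℝ ∧ U.mulVec '' D = D) ∧ w = U.mulVec x}
        = ⊤)
    (T : Matrix (Fin d) (Fin d) ℝ) (hT : IsUnit T.det) :
    (1 / (d : ℝ)) * (∑ i, ∑ j, (T⁻¹ i j) ^ 2)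
      = (vol D ^ ((1 : ℝ) + 4 / d) / secondMoment D)
        / (vol (T.mulVec '' D) ^ ((2 : ℝ) / d)
            * vol ((T⁻¹)ᵀ.mulVec '' D) ^ ((1 : ℝ) + 2 / d)
            / secondMoment ((T⁻¹)ᵀ.mulVec '' D)) := by
  have hT₀ : |T.det| ≠ 0 := abs_ne_zero.2 hT.ne_zero
  have hS : |(T⁻¹)ᵀ.det| = |T.det|⁻¹ := by
    rw [det_transpose, det_nonsing_inv, Ring.inverse_eq_inv', abs_inv]
  have hS₀ : (T⁻¹)ᵀ.det ≠ 0 := by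
    rw [← abs_ne_zero, hS]
    exact inv_ne_zero hT₀
  have hHS : ((T⁻¹)ᵀ * (T⁻¹)ᵀᵀ).trace = ∑ i, ∑ j, (T⁻¹ i j) ^ 2 := by
    rw [transpose_transpose, trace_mul_comm, trace_mul_transpose_self_s7]
  have hV : 0 < vol D := ENNReal.toReal_pos hpos.ne' hbd.measure_lt_top.ne
  have hI : 0 < secondMoment D := secondMoment_pos hd hbd hpos
  rw [vol_image_mulVec, vol_image_mulVec, hS, show (1 : ℝ) + 4 / d = 1 + 2 * (2 / d) by ring,
    Real.mul_rpow_mul_inv_mul_rpow (abs_pos.2 hT.ne_zero) hV, secondMoment_image_mulVec hS₀ hbd,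
    secondMomentMatrix_eq_smul_one hd hbd hirr, Matrix.mul_smul, Matrix.mul_one, Matrix.smul_mul,
    trace_smul, hHS, hS, smul_eq_mul]
  field_simp

/-- geometric interpretation of the Hilbert–Schmidt norm of `T⁻¹`. -/
theorem HS_norm_geometric {d : ℕ} (hd : 0 < d)
    (D : Set (Fin d → ℝ)) (hopen : IsOpen D) (hbd : Bornology.IsBounded D)
    (hpos : 0 < volume D) (hfin : volume D < ⊤)
    (hirr : ∀ x : Fin d → ℝ, x ≠ 0 →
      Submodule.span ℝ {w : Fin d → ℝ | ∃ U : Matrix (Fin d) (Fin d) ℝ,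
        (U ∈ Matrix.orthogonalGroup (Fin d) ℝ ∧ U.mulVec '' D = D) ∧ w = U.mulVec x}
        = ⊤)
    (T : Matrix (Fin d) (Fin d) ℝ) (hT : IsUnit T.det) :
    (1 / (d : ℝ)) * (∑ i, ∑ j, (T⁻¹ i j) ^ 2)
      = (vol D ^ ((1 : ℝ) + 4 / d) / secondMoment D)
        / (vol (T.mulVec '' D) ^ ((2 : ℝ) / d)
            * vol ((T⁻¹)ᵀ.mulVec '' D) ^ ((1 : ℝ) + 2 / d)
            / secondMoment ((T⁻¹)ᵀ.mulVec '' D)) :=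
  HS_norm_geometric_general hd D hbd hpos hirr T hT
end

section
/- Let D be the unit cube centered at the origin in ℝ³, T_ε = diag(1,1,ε), and F(ε) = λ₁(T_ε(D)) · V(T_ε(D))^{7/3} / I(T_ε(D)) = 12π²·(2+ε^{-2})·ε^{4/3}/(2+ε²). Then F(ε) → ∞ as ε → 0⁺. -/
open Filter Real Topology

/-! The factor `ε⁻² · ε^{4/3} = ε^{-2/3}` blows up as `ε → 0⁺`,
while `1 / (2 + ε²)` tends to `1/2`. -/

theorem tendsto_add_inv_sq_mul_rpow_nhdsGT_zero {a p : ℝ} (ha : 0 ≤ a) (hp : p < 2) :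
    Tendsto (fun ε : ℝ => (a + ε⁻¹ ^ 2) * ε ^ p) (𝓝[>] 0) atTop := by
  have hpow : Tendsto (fun ε : ℝ => ε ^ (p - 2)) (𝓝[>] 0) atTop :=
    tendsto_rpow_neg_nhdsGT_zero (sub_neg.2 hp)
  refine (Tendsto.zero_eventuallyLE_add_atTop (f := fun ε => a * ε ^ p) ?_ hpow).congr' ?_
  · filter_upwards [self_mem_nhdsWithin] with ε (hε : 0 < ε)
    exact mul_nonneg ha (rpow_nonneg hε.le p)
  · filter_upwards [self_mem_nhdsWithin] with ε (hε : 0 < ε)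
    rw [rpow_sub hε, rpow_two, add_mul, div_eq_mul_inv, ← inv_pow, mul_comm (ε ^ p)]

/-- the functional `λ₁ · V^{1+4/3} / I` on the squashed boxes
`1 × 1 × ε` equals `12π²(2+ε⁻²)ε^{4/3}/(2+ε²)`, which blows up as `ε → 0⁺`. -/
theorem squashed_box_unbounded :
    Filter.Tendsto
      (fun ε : ℝ => 12 * Real.pi ^ 2 * (2 + ε⁻¹ ^ 2) * ε ^ ((4 : ℝ) / 3) / (2 + ε ^ 2))
      (nhdsWithin 0 (Set.Ioi 0)) Filter.atTop := by
  have hnum := (tendsto_add_inv_sq_mul_rpow_nhdsGT_zero (a := 2) (p := 4 / 3) (by norm_num)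
    (by norm_num)).const_mul_atTop (by positivity : (0 : ℝ) < 12 * π ^ 2)
  have hden : Tendsto (fun ε : ℝ => (2 + ε ^ 2)⁻¹) (𝓝[>] 0) (𝓝 2⁻¹) := by
    refine (Continuous.tendsto' ?_ 0 _ (by norm_num)).mono_left nhdsWithin_le_nhds
    exact (continuous_const.add (continuous_pow 2)).inv₀ fun ε =>
      (by positivity : (0 : ℝ) < 2 + ε ^ 2).ne'
  simpa only [mul_assoc, div_eq_mul_inv] using hnum.atTop_mul_pos (by norm_num) hden
end

section
/- Let T be an invertible d×d real matrix and for n ≥ 1 let τ₁ ≤ … ≤ τ_n be the n smallest values (with multiplicity) of 4π²|y|² over y in the dual lattice T^{-⊤}ℤ^d (these are the smallest n Laplace eigenvalues of the flat torus ℝ^d/Tℤ^d). Let σ₁ ≤ … ≤ σ_n be the corresponding values for the cubical lattice ℤ^d. Then τ₁ + … + τ_n ≤ (σ₁ + … + σ_n) · ‖T^{-⊤}‖²_HS/d, with equality when T is a scalar multiple of an orthogonal matrix. -/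
open Matrix

/-- The dual lattice `T^{-⊤}ℤ^d` of the lattice `Tℤ^d`. -/
def dualLattice {d : ℕ} (T : Matrix (Fin d) (Fin d) ℝ) : Set (Fin d → ℝ) :=
  {y | ∃ m : Fin d → ℤ, y = (T⁻¹)ᵀ.mulVec fun i => (m i : ℝ)}

/-- `τ` lists, in nondecreasing order and with multiplicity, the `n` smallest values
of `4π²|y|²` over `y` in the set `L`. -/
def IsNSmallestEigs {d n : ℕ} (L : Set (Fin d → ℝ)) (τ : Fin n → ℝ) : Prop :=
  ∃ e : Fin n → (Fin d → ℝ), Function.Injective e ∧ (∀ i, e i ∈ L) ∧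
    (∀ i, τ i = 4 * Real.pi ^ 2 * ∑ j, (e i j) ^ 2) ∧ Monotone τ ∧
    ∀ y ∈ L, y ∉ Set.range e → ∀ i, τ i ≤ 4 * Real.pi ^ 2 * ∑ j, (y j) ^ 2

/-!
Write `B = T^{-⊤}`, so the dual lattice is `B ℤ^d`. If `e₁, …, eₙ ∈ ℤ^d` realise `σ`, then for
every signed cyclic shift `g` of the coordinates the points `B g eᵢ` are `n` distinct points of
`B ℤ^d`, so `∑ τ ≤ 4π² ∑ᵢ |B g eᵢ|²`. The `d 2^d` signed cyclic shifts already average `x xᵀ` to a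
multiple of the identity (signs kill the off-diagonal terms, shifts equalise the diagonal), so
averaging over them gives `∑ᵢ |eᵢ|² ‖B‖²_HS / d` on the right, whence the inequality. For `T = cU`
with `U` orthogonal, `Tᵀ` maps the dual lattice back into `ℤ^d` scaling `|y|²` by `c²`, which gives
the reverse inequality.
-/

open Finset

theorem Finset.sum_le_sum_of_card_eq_of_forall_sdiff_le {α M : Type*} [DecidableEq α]
    [AddCommMonoid M] [LinearOrder M] [IsOrderedAddMonoid M] {s t : Finset α} (v : α → M)
    (hst : #s = #t) (hv : ∀ a ∈ s \ t, ∀ b ∈ t \ s, v a ≤ v b) :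
    ∑ x ∈ s, v x ≤ ∑ x ∈ t, v x := by
  rw [← sum_inter_add_sum_sdiff s t, ← sum_inter_add_sum_sdiff t s, inter_comm t s]
  gcongr ∑ x ∈ s ∩ t, v x + ?_
  rcases (s \ t).eq_empty_or_nonempty with hempty | hne
  · rw [hempty, card_eq_zero.mp ((card_sdiff_comm hst).symm.trans (by rw [hempty, card_empty]))]
  obtain ⟨a, ha, hmax⟩ := exists_max_image (s \ t) v hne
  calc ∑ x ∈ s \ t, v x ≤ #(s \ t) • v a := sum_le_card_nsmul _ _ _ hmax
    _ = #(t \ s) • v a := by rw [card_sdiff_comm hst]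
    _ ≤ ∑ x ∈ t \ s, v x := card_nsmul_le_sum _ _ _ fun b hb => hv a ha b hb

theorem IsNSmallestEigs.sum_le {d n : ℕ} {L : Set (Fin d → ℝ)} {τ : Fin n → ℝ}
    (hτ : IsNSmallestEigs L τ) {f : Fin n → Fin d → ℝ} (hf : Function.Injective f)
    (hfL : ∀ i, f i ∈ L) :
    ∑ i, τ i ≤ ∑ i, 4 * Real.pi ^ 2 * ∑ j, f i j ^ 2 := by
  classical
  obtain ⟨e, he, -, hτe, -, hmin⟩ := hτ
  set v : (Fin d → ℝ) → ℝ := fun y => 4 * Real.pi ^ 2 * ∑ j, y j ^ 2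
  have hsum_image {g : Fin n → Fin d → ℝ} (hg : Function.Injective g) :
      ∑ y ∈ univ.image g, v y = ∑ i, v (g i) := sum_image fun i _ k _ h => hg h
  have hexchange : ∑ y ∈ univ.image e, v y ≤ ∑ y ∈ univ.image f, v y := by
    refine sum_le_sum_of_card_eq_of_forall_sdiff_le v ?_ ?_
    · rw [card_image_of_injective _ he, card_image_of_injective _ hf]
    · simp only [mem_sdiff, mem_image, mem_univ, true_and, not_exists]
      rintro _ ⟨⟨i, rfl⟩, -⟩ _ ⟨⟨k, rfl⟩, hk⟩
      exact (hτe i).symm.trans_le (hmin _ (hfL k) (fun ⟨i', hi'⟩ => hk i' hi') i)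
  rwa [hsum_image he, hsum_image hf, ← funext hτe] at hexchange

section SignedShift

variable {d : ℕ}

theorem sum_units_mul_units (j k : Fin d) :
    ∑ s : Fin d → ℤˣ, (s j : ℝ) * (s k : ℝ) = if j = k then 2 ^ d else 0 := by
  split_ifs with hjk
  · subst hjk
    simp [← Int.cast_mul, ← Units.val_mul, Int.units_mul_self]
  · -- flipping the sign of the `j`-th coordinate negates every term
    have hflip : ∑ s : Fin d → ℤˣ, -((s j : ℝ) * (s k : ℝ)) =
        ∑ s : Fin d → ℤˣ, (s j : ℝ) * (s k : ℝ) :=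
      Fintype.sum_equiv (Equiv.mulLeft (Pi.mulSingle j (-1))) _ _ fun s => by
        simp [Ne.symm hjk]
    rw [sum_neg_distrib] at hflip
    linarith

theorem sum_sq_sum_units_mul (a : Fin d → ℝ) :
    ∑ s : Fin d → ℤˣ, (∑ j, (s j : ℝ) * a j) ^ 2 = 2 ^ d * ∑ j, a j ^ 2 := by
  have hexpand (s : Fin d → ℤˣ) :
      (∑ j, (s j : ℝ) * a j) ^ 2 = ∑ j, ∑ k, a j * a k * ((s j : ℝ) * (s k : ℝ)) := by
    rw [sq, sum_mul_sum]
    exact sum_congr rfl fun j _ => sum_congr rfl fun k _ => by ring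
  simp only [hexpand]
  rw [sum_comm]
  refine (sum_congr rfl fun j _ => sum_comm).trans ?_
  simp only [← mul_sum, sum_units_mul_units, mul_ite, mul_zero, sum_ite_eq, mem_univ, if_true]
  rw [mul_sum]
  exact sum_congr rfl fun j _ => by ring

def signedShift (s : Fin d → ℤˣ) (k : Fin d) (x : Fin d → ℝ) : Fin d → ℝ :=
  fun j => (s j : ℝ) * x (j + k)

theorem signedShift_injective [NeZero d] (s : Fin d → ℤˣ) (k : Fin d) :
    Function.Injective (signedShift s k) := by
  intro x y hxy
  funext i
  have hs : (s (i - k) : ℝ) ≠ 0 := Int.cast_ne_zero.mpr (s (i - k)).ne_zero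
  simpa [signedShift, hs] using congrFun hxy (i - k)

theorem signedShift_intCast (s : Fin d → ℤˣ) (k : Fin d) (m : Fin d → ℤ) :
    signedShift s k (fun i => (m i : ℝ)) = fun i => ((s i * m (i + k) : ℤ) : ℝ) := by
  funext i
  simp [signedShift]

theorem sum_sum_sq_mulVec_signedShift [NeZero d] (B : Matrix (Fin d) (Fin d) ℝ) (x : Fin d → ℝ) :
    ∑ g : (Fin d → ℤˣ) × Fin d, ∑ i, (B *ᵥ signedShift g.1 g.2 x) i ^ 2
      = 2 ^ d * (∑ i, ∑ j, B i j ^ 2) * ∑ j, x j ^ 2 := by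
  calc ∑ g : (Fin d → ℤˣ) × Fin d, ∑ i, (B *ᵥ signedShift g.1 g.2 x) i ^ 2
      = ∑ k, ∑ i, ∑ s : Fin d → ℤˣ, (∑ j, (s j : ℝ) * (B i j * x (j + k))) ^ 2 := by
        rw [Fintype.sum_prod_type, sum_comm]
        refine sum_congr rfl fun k _ => ?_
        rw [sum_comm]
        simp only [mulVec, dotProduct, signedShift, mul_left_comm]
    _ = 2 ^ d * ∑ i, ∑ j, B i j ^ 2 * ∑ k, x (j + k) ^ 2 := by
        simp only [sum_sq_sum_units_mul, mul_pow, mul_sum]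
        rw [sum_comm]
        exact sum_congr rfl fun i _ => sum_comm
    _ = 2 ^ d * (∑ i, ∑ j, B i j ^ 2) * ∑ j, x j ^ 2 := by
        have hshift (j : Fin d) : ∑ k, x (j + k) ^ 2 = ∑ a, x a ^ 2 :=
          Fintype.sum_equiv (Equiv.addLeft j) _ _ fun _ => rfl
        simp only [hshift, ← sum_mul, mul_assoc]

end SignedShift

theorem mem_dualLattice_one {d : ℕ} {y : Fin d → ℝ} :
    y ∈ dualLattice (1 : Matrix (Fin d) (Fin d) ℝ) ↔ ∃ m : Fin d → ℤ, y = fun i => (m i : ℝ) := by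
  simp [dualLattice]

theorem card_mul_sum_le_of_isNSmallestEigs_dualLattice {d n : ℕ} [NeZero d]
    {T : Matrix (Fin d) (Fin d) ℝ} (hT : IsUnit T.det) {τ σ : Fin n → ℝ}
    (hτ : IsNSmallestEigs (dualLattice T) τ)
    (hσ : IsNSmallestEigs (dualLattice (1 : Matrix (Fin d) (Fin d) ℝ)) σ) :
    d * ∑ i, τ i ≤ (∑ i, σ i) * ∑ i, ∑ j, ((T⁻¹)ᵀ i j) ^ 2 := by
  obtain ⟨e, he, heL, hσe, -, -⟩ := hσ
  choose m hm using fun i => mem_dualLattice_one.mp (heL i)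
  set B := (T⁻¹)ᵀ
  have hB : Function.Injective B.mulVec := mulVec_injective_iff_isUnit.mpr <|
    (isUnit_iff_isUnit_det _).mpr (by simpa [B] using T.isUnit_nonsing_inv_det hT)
  have hbound (s : Fin d → ℤˣ) (k : Fin d) :
      ∑ i, τ i ≤ ∑ i, 4 * Real.pi ^ 2 * ∑ j, (B *ᵥ signedShift s k (e i)) j ^ 2 := by
    refine hτ.sum_le ((hB.comp (signedShift_injective s k)).comp he) fun i =>
      ⟨fun j => s j * m i (j + k), ?_⟩
    simp only [hm i, signedShift_intCast, B]
  have haverage : 2 ^ d * (d * ∑ i, τ i) ≤ 2 ^ d * ((∑ i, σ i) * ∑ i, ∑ j, B i j ^ 2) :=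
    calc 2 ^ d * (d * ∑ i, τ i) = ∑ _g : (Fin d → ℤˣ) × Fin d, ∑ i, τ i := by
          simp [mul_assoc]
      _ ≤ ∑ g : (Fin d → ℤˣ) × Fin d,
            ∑ i, 4 * Real.pi ^ 2 * ∑ j, (B *ᵥ signedShift g.1 g.2 (e i)) j ^ 2 :=
          sum_le_sum fun g _ => hbound g.1 g.2
      _ = ∑ i, 4 * Real.pi ^ 2 * ∑ g : (Fin d → ℤˣ) × Fin d,
            ∑ j, (B *ᵥ signedShift g.1 g.2 (e i)) j ^ 2 := by
          simp only [mul_sum]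
          exact sum_comm
      _ = 2 ^ d * ((∑ i, σ i) * ∑ i, ∑ j, B i j ^ 2) := by
          simp only [sum_sum_sq_mulVec_signedShift, hσe]
          conv_rhs => rw [sum_mul, mul_sum]
          exact sum_congr rfl fun i _ => by ring
  exact le_of_mul_le_mul_left haverage (by positivity)

theorem sum_le_mul_sum_of_sum_sq_transpose_mulVec_eq {d n : ℕ}
    {T : Matrix (Fin d) (Fin d) ℝ} (hT : IsUnit T.det) {a : ℝ}
    (ha : ∀ x, ∑ j, (Tᵀ *ᵥ x) j ^ 2 = a * ∑ j, x j ^ 2) {τ σ : Fin n → ℝ}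
    (hτ : IsNSmallestEigs (dualLattice T) τ)
    (hσ : IsNSmallestEigs (dualLattice (1 : Matrix (Fin d) (Fin d) ℝ)) σ) :
    ∑ i, σ i ≤ a * ∑ i, τ i := by
  obtain ⟨e, he, heL, hτe, -, -⟩ := hτ
  have hTt : Function.Injective Tᵀ.mulVec := mulVec_injective_iff_isUnit.mpr <|
    (isUnit_iff_isUnit_det _).mpr (by rwa [det_transpose])
  have hmem (i : Fin n) : Tᵀ *ᵥ e i ∈ dualLattice (1 : Matrix (Fin d) (Fin d) ℝ) := by
    obtain ⟨m, hm⟩ := heL i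
    rw [hm, mulVec_mulVec, ← transpose_mul, nonsing_inv_mul T hT, transpose_one, one_mulVec]
    exact mem_dualLattice_one.mpr ⟨m, rfl⟩
  calc ∑ i, σ i ≤ ∑ i, 4 * Real.pi ^ 2 * ∑ j, (Tᵀ *ᵥ e i) j ^ 2 := hσ.sum_le (hTt.comp he) hmem
    _ = a * ∑ i, τ i := by
        simp only [ha, hτe]
        rw [mul_sum]
        exact sum_congr rfl fun i _ => by ring

section Orthogonal

variable {ι : Type*} [Fintype ι] [DecidableEq ι] {A : Matrix ι ι ℝ}

theorem sum_sq_mulVec_of_transpose_mul_self (hA : Aᵀ * A = 1) (x : ι → ℝ) :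
    ∑ j, (A *ᵥ x) j ^ 2 = ∑ j, x j ^ 2 := by
  simp only [sq]
  change (A *ᵥ x) ⬝ᵥ (A *ᵥ x) = x ⬝ᵥ x
  rw [dotProduct_mulVec, ← vecMul_transpose, vecMul_vecMul, hA, vecMul_one]

theorem sum_sum_sq_of_mul_transpose_self (hA : A * Aᵀ = 1) :
    ∑ i, ∑ j, A i j ^ 2 = Fintype.card ι := by
  have hdiag (i : ι) : ∑ j, A i j ^ 2 = (A * Aᵀ) i i := by
    simp only [mul_apply, transpose_apply, sq]
  simp [hdiag, hA]

end Orthogonal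

theorem transpose_inv_smul_of_mem_orthogonalGroup {d : ℕ} {c : ℝ} (hc : c ≠ 0)
    {U : Matrix (Fin d) (Fin d) ℝ} (hU : U ∈ orthogonalGroup (Fin d) ℝ) :
    ((c • U)⁻¹)ᵀ = c⁻¹ • U := by
  rw [inv_eq_right_inv (B := c⁻¹ • Uᵀ), transpose_smul, transpose_transpose]
  rw [smul_mul_smul_comm, mul_inv_cancel₀ hc, (mem_orthogonalGroup_iff (Fin d) ℝ).mp hU, one_smul]

theorem card_mul_sum_eq_of_isNSmallestEigs_dualLattice_smul {d n : ℕ} [NeZero d] {c : ℝ}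
    (hc : c ≠ 0) {U : Matrix (Fin d) (Fin d) ℝ} (hU : U ∈ orthogonalGroup (Fin d) ℝ)
    {τ σ : Fin n → ℝ} (hτ : IsNSmallestEigs (dualLattice (c • U)) τ)
    (hσ : IsNSmallestEigs (dualLattice (1 : Matrix (Fin d) (Fin d) ℝ)) σ) :
    d * ∑ i, τ i = (∑ i, σ i) * ∑ i, ∑ j, (((c • U)⁻¹)ᵀ i j) ^ 2 := by
  have hUUt : U * Uᵀ = 1 := (mem_orthogonalGroup_iff (Fin d) ℝ).mp hU
  have hdet : IsUnit (c • U).det := by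
    rw [det_smul]
    exact (hc.isUnit.pow _).mul (UnitaryGroup.det_isUnit ⟨U, hU⟩)
  have hnorm : ∑ i, ∑ j, (((c • U)⁻¹)ᵀ i j) ^ 2 = (c ^ 2)⁻¹ * d := by
    simp only [transpose_inv_smul_of_mem_orthogonalGroup hc hU, Matrix.smul_apply, smul_eq_mul,
      mul_pow, ← mul_sum, sum_sum_sq_of_mul_transpose_self hUUt, Fintype.card_fin, inv_pow]
  have hscale (x : Fin d → ℝ) : ∑ j, ((c • U)ᵀ *ᵥ x) j ^ 2 = c ^ 2 * ∑ j, x j ^ 2 := by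
    have hUtU : Uᵀᵀ * Uᵀ = 1 := by rwa [transpose_transpose]
    simp only [transpose_smul, smul_mulVec, Pi.smul_apply, smul_eq_mul, mul_pow, ← mul_sum,
      sum_sq_mulVec_of_transpose_mul_self hUtU]
  have hupper := card_mul_sum_le_of_isNSmallestEigs_dualLattice hdet hτ hσ
  have hlower := sum_le_mul_sum_of_sum_sq_transpose_mulVec_eq hdet hscale hτ hσ
  rw [hnorm] at hupper ⊢
  refine le_antisymm hupper ?_
  calc (∑ i, σ i) * ((c ^ 2)⁻¹ * d) ≤ c ^ 2 * (∑ i, τ i) * ((c ^ 2)⁻¹ * d) := by gcongr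
    _ = d * ∑ i, τ i := by field_simp

theorem flat_torus_eigenvalue_sum_general {d n : ℕ} (hd : 0 < d)
    (T : Matrix (Fin d) (Fin d) ℝ) (hT : IsUnit T.det)
    (τ σ : Fin n → ℝ)
    (hτ : IsNSmallestEigs (dualLattice T) τ)
    (hσ : IsNSmallestEigs (dualLattice (1 : Matrix (Fin d) (Fin d) ℝ)) σ) :
    (∑ i, τ i) ≤ (∑ i, σ i) * (∑ i, ∑ j, ((T⁻¹)ᵀ i j) ^ 2) / d ∧
    (∀ c : ℝ, c ≠ 0 → ∀ U ∈ Matrix.orthogonalGroup (Fin d) ℝ, T = c • U →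
      (∑ i, τ i) = (∑ i, σ i) * (∑ i, ∑ j, ((T⁻¹)ᵀ i j) ^ 2) / d) := by
  have : NeZero d := ⟨hd.ne'⟩
  have hd' : (0 : ℝ) < d := by exact_mod_cast hd
  refine ⟨?_, fun c hc U hU hTU => ?_⟩
  · rw [le_div_iff₀ hd', mul_comm]
    exact card_mul_sum_le_of_isNSmallestEigs_dualLattice hT hτ hσ
  · subst hTU
    rw [eq_div_iff hd'.ne', mul_comm]
    exact card_mul_sum_eq_of_isNSmallestEigs_dualLattice_smul hc hU hτ hσ

/-- the sum of the `n` smallest Laplace eigenvalues of the flat torus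
`ℝ^d/Tℤ^d` is at most that of the cubical torus times `‖T^{-⊤}‖²_HS/d`, with
equality when `T` is a scalar multiple of an orthogonal matrix. -/
theorem flat_torus_eigenvalue_sum {d n : ℕ} (hd : 0 < d) (hn : 1 ≤ n)
    (T : Matrix (Fin d) (Fin d) ℝ) (hT : IsUnit T.det)
    (τ σ : Fin n → ℝ)
    (hτ : IsNSmallestEigs (dualLattice T) τ)
    (hσ : IsNSmallestEigs (dualLattice (1 : Matrix (Fin d) (Fin d) ℝ)) σ) :
    (∑ i, τ i) ≤ (∑ i, σ i) * (∑ i, ∑ j, ((T⁻¹)ᵀ i j) ^ 2) / d ∧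
    (∀ c : ℝ, c ≠ 0 → ∀ U ∈ Matrix.orthogonalGroup (Fin d) ℝ, T = c • U →
      (∑ i, τ i) = (∑ i, σ i) * (∑ i, ∑ j, ((T⁻¹)ᵀ i j) ^ 2) / d) :=
  flat_torus_eigenvalue_sum_general hd T hT τ σ hτ hσ
end
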